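/- arXiv:2208.07549 — 2 statements merged into one kernel-verified Lean document; each statement's English description precedes it below -/
import Mathlib

section
/- For all integers n ≥ 0 and k ≥ 1, the alternating degenerate power sum satisfies T_{k,λ}(n) = ((−1)^n/2) · (n+1)_{k,λ} + (1+(−1)^n) · ∑_{j=1}^{k} (−1)^j · j! · (1/2)^{j+1} · S_{2,λ}(k,j) + (−1)^n · ∑_{j=1}^{k−1} C(k,j) · (n+1)_{k−j,λ} · ∑_{i=1}^{j} (−1)^i · i! · (1/2)^{i+1} · S_{2,λ}(j,i). -/
open Finset

noncomputable section

/-- The generalized falling factorial `(x)_{n,λ} = x(x-λ)⋯(x-(n-1)λ)`. -/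
def gff (lam x : ℝ) (n : ℕ) : ℝ := ∏ i ∈ Finset.range n, (x - i * lam)

/-- The ordinary falling factorial `(x)_r = x(x-1)⋯(x-r+1)` of a real number. -/
def ff (x : ℝ) (r : ℕ) : ℝ := ∏ i ∈ Finset.range r, (x - i)

/-- The degenerate exponential `e_λ^x(t) = ∑_{n≥0} (x)_{n,λ} t^n/n!` as a formal power series. -/
def degExp (lam x : ℝ) : PowerSeries ℝ :=
  PowerSeries.mk fun n => gff lam x n / n.factorial

/-- `egfCoeff f n = a_n` when `f = ∑_{n≥0} a_n t^n/n!`. -/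
def egfCoeff (f : PowerSeries ℝ) (n : ℕ) : ℝ := n.factorial * PowerSeries.coeff n f

/-- The formal binomial power `(1+g)^a = ∑_{k≥0} (a)_k/k! · g^k`,
intended for `g` with zero constant term (so the sum is coefficientwise finite). -/
def binomPow (a : ℝ) (g : PowerSeries ℝ) : PowerSeries ℝ :=
  PowerSeries.mk fun n =>
    ∑ k ∈ Finset.range (n + 1), (ff a k / k.factorial) * PowerSeries.coeff n (g ^ k)

/-- `(2/(e_λ(t)+1))^α`, the `(-α)`-th formal binomial power of `(e_λ(t)+1)/2 = 1 + (e_λ(t)-1)/2`. -/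
def eulerGF (lam a : ℝ) : PowerSeries ℝ :=
  binomPow (-a) (PowerSeries.C (1 / 2 : ℝ) * (degExp lam 1 - 1))

/-- Generalized degenerate Euler-Genocchi polynomials `A^{(r)}_{n,λ}(x)`, defined by
`∑_{n≥0} A^{(r)}_{n,λ}(x) t^n/n! = 2 t^r e_λ^x(t)/(e_λ(t)+1)`. -/
def A (lam : ℝ) (r : ℕ) (x : ℝ) (n : ℕ) : ℝ :=
  egfCoeff (2 * PowerSeries.X ^ r * degExp lam x * (degExp lam 1 + 1)⁻¹) n

/-- Generalized degenerate Euler-Genocchi polynomials of order `α`, `A^{(r,α)}_{n,λ}(x)`,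
defined by `∑_{n≥0} A^{(r,α)}_{n,λ}(x) t^n/n! = t^r (2/(e_λ(t)+1))^α e_λ^x(t)`. -/
def Aa (lam a : ℝ) (r : ℕ) (x : ℝ) (n : ℕ) : ℝ :=
  egfCoeff (PowerSeries.X ^ r * eulerGF lam a * degExp lam x) n

/-- Degenerate Euler polynomials of order `α`:
`∑_{n≥0} E^{(α)}_{n,λ}(x) t^n/n! = (2/(e_λ(t)+1))^α e_λ^x(t)`. -/
def Epoly (lam a x : ℝ) (n : ℕ) : ℝ := egfCoeff (eulerGF lam a * degExp lam x) n

/-- Degenerate Euler polynomials `E_{n,λ}(x)`: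
`∑_{n≥0} E_{n,λ}(x) t^n/n! = 2 e_λ^x(t)/(e_λ(t)+1)`. -/
def E1 (lam x : ℝ) (n : ℕ) : ℝ :=
  egfCoeff (2 * degExp lam x * (degExp lam 1 + 1)⁻¹) n

/-- Degenerate Euler numbers `E_{n,λ}`: `∑_{n≥0} E_{n,λ} t^n/n! = 2/(e_λ(t)+1)`. -/
def Enum (lam : ℝ) (n : ℕ) : ℝ :=
  egfCoeff (2 * (degExp lam 1 + 1)⁻¹) n

/-- Degenerate Stirling numbers of the second kind:
`∑_{n≥k} S_{2,λ}(n,k) t^n/n! = (1/k!)(e_λ(t)-1)^k`. -/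
def S2 (lam : ℝ) (n k : ℕ) : ℝ :=
  egfCoeff (PowerSeries.C (1 / k.factorial : ℝ) * (degExp lam 1 - 1) ^ k) n

/-- Alternating degenerate power sum `T_{k,λ}(n) = ∑_{i=0}^n (-1)^i (i)_{k,λ}`. -/
def T (lam : ℝ) (k n : ℕ) : ℝ := ∑ i ∈ Finset.range (n + 1), (-1 : ℝ) ^ i * gff lam i k
lemma gff_succ (lam x : ℝ) (n : ℕ) : gff lam x (n+1) = gff lam x n * (x - n * lam) := by
  simp [gff, Finset.prod_range_succ]

lemma gff_zero (lam x : ℝ) : gff lam x 0 = 1 := by simp [gff]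

lemma gff_zero_left (lam : ℝ) {n : ℕ} (hn : 0 < n) : gff lam 0 n = 0 := by
  apply Finset.prod_eq_zero (Finset.mem_range.2 hn)
  simp

lemma gff_vandermonde (lam : ℝ) (n : ℕ) (a b : ℝ) :
    ∑ j ∈ range (n+1), (n.choose j : ℝ) * gff lam a j * gff lam b (n-j)
      = gff lam (a+b) n := by
  induction n with
  | zero => simp [gff]
  | succ n ih =>
    have key : ∀ j ∈ range (n+1),
        ((n.choose j : ℝ)) * gff lam a j * gff lam b (n-j) * ((a+b) - n*lam)
        = (n.choose j : ℝ) * (gff lam a (j+1)) * gff lam b (n-j)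
          + (n.choose j : ℝ) * gff lam a j * (gff lam b (n-j+1)) := by
      intro j hj
      have hjn : j ≤ n := Nat.lt_succ_iff.mp (Finset.mem_range.mp hj)
      have hc : ((n - j : ℕ) : ℝ) = (n : ℝ) - j := by push_cast [hjn]; ring
      rw [gff_succ, gff_succ, hc]; ring
    have step : gff lam (a+b) (n+1)
        = (∑ j ∈ range (n+1), (n.choose j : ℝ) * (gff lam a (j+1)) * gff lam b (n-j))
          + ∑ j ∈ range (n+1), (n.choose j : ℝ) * gff lam a j * gff lam b (n-j+1) := by
      rw [gff_succ, ← ih, Finset.sum_mul, ← Finset.sum_add_distrib]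
      exact Finset.sum_congr rfl key
    have L : ∑ j ∈ range (n+1+1), ((n+1).choose j : ℝ) * gff lam a j * gff lam b (n+1-j)
        = (∑ j ∈ range (n+1), (n.choose j : ℝ) * gff lam a (j+1) * gff lam b (n-j))
          + (∑ j ∈ range (n+1), (n.choose (j+1) : ℝ) * gff lam a (j+1) * gff lam b (n-j))
          + gff lam b (n+1) := by
      rw [Finset.sum_range_succ']
      have : ∀ j ∈ range (n+1),
          (((n+1).choose (j+1) : ℕ) : ℝ) * gff lam a (j+1) * gff lam b (n+1-(j+1))
          = (n.choose j : ℝ) * gff lam a (j+1) * gff lam b (n-j)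
            + (n.choose (j+1) : ℝ) * gff lam a (j+1) * gff lam b (n-j) := by
        intro j hj
        have h1 : n+1-(j+1) = n - j := by omega
        rw [h1, Nat.choose_succ_succ]
        push_cast; ring
      rw [Finset.sum_congr rfl this, Finset.sum_add_distrib]
      simp [gff_zero]
    have R2 : ∑ j ∈ range (n+1), (n.choose j : ℝ) * gff lam a j * gff lam b (n-j+1)
        = (∑ j ∈ range (n+1), (n.choose (j+1) : ℝ) * gff lam a (j+1) * gff lam b (n-j))
          + gff lam b (n+1) := by
      rw [Finset.sum_range_succ' (fun j => (n.choose j : ℝ) * gff lam a j * gff lam b (n-j+1)) n]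
      rw [Finset.sum_range_succ (fun j => (n.choose (j+1) : ℝ) * gff lam a (j+1) * gff lam b (n-j)) n]
      have h0 : (n.choose (n+1) : ℝ) = 0 := by simp [Nat.choose_eq_zero_of_lt]
      rw [h0]
      have : ∀ j ∈ range n, (n.choose (j+1) : ℝ) * gff lam a (j+1) * gff lam b (n-(j+1)+1)
          = (n.choose (j+1) : ℝ) * gff lam a (j+1) * gff lam b (n-j) := by
        intro j hj
        have : n - (j+1) + 1 = n - j := by
          have := Finset.mem_range.mp hj; omega
        rw [this]
      rw [Finset.sum_congr rfl this]
      simp [gff_zero]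
    rw [L, step, R2]
    ring

lemma degExp_mul (lam a b : ℝ) : degExp lam a * degExp lam b = degExp lam (a+b) := by
  ext m
  rw [PowerSeries.coeff_mul, Finset.Nat.sum_antidiagonal_eq_sum_range_succ_mk]
  simp only [degExp, PowerSeries.coeff_mk]
  rw [← gff_vandermonde lam m a b, Finset.sum_div]
  refine Finset.sum_congr rfl fun j hj => ?_
  have hjm : j ≤ m := Nat.lt_succ_iff.mp (Finset.mem_range.mp hj)
  have hfac : (m.choose j : ℝ) * j.factorial * (m-j).factorial = m.factorial := by
    rw_mod_cast [Nat.choose_mul_factorial_mul_factorial hjm]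
  field_simp
  rw [← hfac]; ring

lemma degExp_zero (lam : ℝ) : degExp lam 0 = 1 := by
  ext m
  simp only [degExp, PowerSeries.coeff_mk, PowerSeries.coeff_one]
  rcases Nat.eq_zero_or_pos m with h | h
  · simp [h, gff]
  · rw [gff_zero_left lam h]
    simp [Nat.pos_iff_ne_zero.mp h]

lemma coeff_pow_eq_zero {H : PowerSeries ℝ} (h0 : PowerSeries.constantCoeff H = 0)
    {p i : ℕ} (hpi : p < i) : PowerSeries.coeff p (H ^ i) = 0 := by
  obtain ⟨g, hg⟩ : (PowerSeries.X : PowerSeries ℝ) ∣ H := PowerSeries.X_dvd_iff.mpr h0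
  have : H ^ i = g ^ i * PowerSeries.X ^ i := by rw [hg]; ring
  rw [this, PowerSeries.coeff_mul_X_pow']
  simp [Nat.not_le.mpr hpi]

lemma coeff_mul_congr {f g h : PowerSeries ℝ} {m : ℕ}
    (hfg : ∀ p ≤ m, PowerSeries.coeff p f = PowerSeries.coeff p g) :
    PowerSeries.coeff m (f * h) = PowerSeries.coeff m (g * h) := by
  rw [PowerSeries.coeff_mul, PowerSeries.coeff_mul]
  refine Finset.sum_congr rfl fun p hp => ?_
  have hple : p.1 ≤ m := by
    have := Finset.HasAntidiagonal.mem_antidiagonal.mp hp; omega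
  rw [hfg _ hple]

lemma geom_mk_mul {H : PowerSeries ℝ} (h0 : PowerSeries.constantCoeff H = 0) :
    (PowerSeries.mk fun j => ∑ i ∈ range (j+1), PowerSeries.coeff j (H ^ i)) * (1 - H) = 1 := by
  ext m
  have key : ∀ p ≤ m, PowerSeries.coeff p
      (PowerSeries.mk fun j => ∑ i ∈ range (j+1), PowerSeries.coeff j (H ^ i))
      = PowerSeries.coeff p (∑ i ∈ range (m+1), H ^ i) := by
    intro p hpm
    rw [PowerSeries.coeff_mk, map_sum]
    rw [← Finset.sum_subset (Finset.range_subset_range.mpr (by omega : p+1 ≤ m+1))]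
    intro i hi hni
    exact coeff_pow_eq_zero h0 (by simp at hni ⊢; omega)
  rw [coeff_mul_congr key]
  have geo : (∑ i ∈ range (m+1), H ^ i) * (1 - H) = 1 - H ^ (m+1) := by
    have := geom_sum_mul H (m+1)
    linear_combination -this
  rw [geo, map_sub, coeff_pow_eq_zero h0 (Nat.lt_succ_self m), sub_zero]

section Main
variable (lam : ℝ)

def Hs : PowerSeries ℝ := PowerSeries.C (-(1/2)) * (degExp lam 1 - 1)

def Fs : PowerSeries ℝ := PowerSeries.C (1/2) *
  PowerSeries.mk (fun j => ∑ i ∈ range (j+1), PowerSeries.coeff j ((Hs lam) ^ i))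

lemma constantCoeff_degExp (x : ℝ) : PowerSeries.constantCoeff (degExp lam x) = 1 := by
  have := PowerSeries.coeff_mk 0 (fun n => gff lam x n / n.factorial)
  simp [degExp, ← PowerSeries.coeff_zero_eq_constantCoeff, gff_zero]

lemma Hs_const : PowerSeries.constantCoeff (Hs lam) = 0 := by
  simp [Hs, constantCoeff_degExp]

lemma eAdd : degExp lam 1 + 1 = PowerSeries.C 2 * (1 - Hs lam) := by
  have h : (PowerSeries.C (2:ℝ)) * (PowerSeries.C (-(1/2:ℝ))) = PowerSeries.C (-1:ℝ) := by
    rw [← map_mul]; norm_num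
  have : PowerSeries.C 2 * (1 - Hs lam)
      = PowerSeries.C 2 - PowerSeries.C 2 * PowerSeries.C (-(1/2)) * (degExp lam 1 - 1) := by
    rw [Hs]; ring
  rw [this, h]
  have h2 : (PowerSeries.C 2 : PowerSeries ℝ) = 2 := map_ofNat _ 2
  have h1 : (PowerSeries.C (-1) : PowerSeries ℝ) = -1 := by
    rw [map_neg, map_one]
  rw [h2, h1]; ring

lemma Fs_mul : Fs lam * (degExp lam 1 + 1) = 1 := by
  rw [eAdd, Fs]
  have : PowerSeries.C (1/2) *
      PowerSeries.mk (fun j => ∑ i ∈ range (j+1), PowerSeries.coeff j ((Hs lam) ^ i)) *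
      (PowerSeries.C 2 * (1 - Hs lam))
      = (PowerSeries.C (1/2) * PowerSeries.C 2) *
        (PowerSeries.mk (fun j => ∑ i ∈ range (j+1), PowerSeries.coeff j ((Hs lam) ^ i)) *
          (1 - Hs lam)) := by ring
  rw [this, geom_mk_mul (Hs_const lam), ← map_mul]
  norm_num

lemma telescope (n : ℕ) :
    (degExp lam 1 + 1) * (∑ i ∈ range (n+1), PowerSeries.C ((-1:ℝ)^i) * degExp lam i)
      = 1 + PowerSeries.C ((-1:ℝ)^n) * degExp lam ((n:ℝ)+1) := by
  induction n with
  | zero => simp [degExp_zero]; ring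
  | succ n ih =>
    rw [Finset.sum_range_succ, mul_add, ih]
    have hc : PowerSeries.C ((-1:ℝ)^(n+1)) = - PowerSeries.C ((-1:ℝ)^n) := by
      rw [pow_succ, map_mul]; norm_num
    have hcast : ((n+1:ℕ) : ℝ) = (n:ℝ)+1 := by push_cast; ring
    have hmul' : (degExp lam 1) * degExp lam ((n:ℝ)+1) = degExp lam (((n:ℝ)+1)+1) := by
      rw [degExp_mul]; ring_nf
    have expand : (degExp lam 1 + 1) * (PowerSeries.C ((-1:ℝ)^(n+1)) * degExp lam ((n+1:ℕ):ℝ))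
        = -PowerSeries.C ((-1:ℝ)^n) * ((degExp lam 1) * degExp lam ((n:ℝ)+1))
          - PowerSeries.C ((-1:ℝ)^n) * degExp lam ((n:ℝ)+1) := by
      rw [hc, hcast]; ring
    rw [expand, hmul', hc, hcast]
    ring


def Et (j : ℕ) : ℝ := ∑ i ∈ range (j+1), (-1:ℝ)^i * i.factorial * (1/2:ℝ)^(i+1) * S2 lam j i

lemma coeff_Fs (j : ℕ) : PowerSeries.coeff j (Fs lam) = Et lam j / j.factorial := by
  rw [Fs, PowerSeries.coeff_C_mul, PowerSeries.coeff_mk, Et, Finset.sum_div, Finset.mul_sum]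
  refine Finset.sum_congr rfl fun i _ => ?_
  have hH : (Hs lam)^i = PowerSeries.C ((-(1/2:ℝ))^i) * (degExp lam 1 - 1)^i := by
    rw [Hs, mul_pow, ← map_pow]
  have hS : S2 lam j i = (j.factorial : ℝ) *
      ((1 / (i.factorial:ℝ)) * PowerSeries.coeff j ((degExp lam 1 - 1)^i)) := by
    rw [S2, egfCoeff, PowerSeries.coeff_C_mul]
  rw [hH, PowerSeries.coeff_C_mul, hS, neg_pow]
  have hj : (j.factorial : ℝ) ≠ 0 := Nat.cast_ne_zero.mpr (Nat.factorial_ne_zero j)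
  have hi : (i.factorial : ℝ) ≠ 0 := Nat.cast_ne_zero.mpr (Nat.factorial_ne_zero i)
  field_simp
  ring

lemma key_identity (n k : ℕ) :
    T lam k n = Et lam k + (-1:ℝ)^n * ∑ j ∈ range (k+1),
      (k.choose j : ℝ) * Et lam j * gff lam ((n:ℝ)+1) (k-j) := by
  have hG : (∑ i ∈ range (n+1), PowerSeries.C ((-1:ℝ)^i) * degExp lam i)
      = Fs lam + PowerSeries.C ((-1:ℝ)^n) * (Fs lam * degExp lam ((n:ℝ)+1)) := by
    calc (∑ i ∈ range (n+1), PowerSeries.C ((-1:ℝ)^i) * degExp lam i)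
        = (Fs lam * (degExp lam 1 + 1)) *
            (∑ i ∈ range (n+1), PowerSeries.C ((-1:ℝ)^i) * degExp lam i) := by
          rw [Fs_mul]; ring
      _ = Fs lam * ((degExp lam 1 + 1) *
            (∑ i ∈ range (n+1), PowerSeries.C ((-1:ℝ)^i) * degExp lam i)) := by ring
      _ = Fs lam * (1 + PowerSeries.C ((-1:ℝ)^n) * degExp lam ((n:ℝ)+1)) := by
          rw [telescope]
      _ = Fs lam + PowerSeries.C ((-1:ℝ)^n) * (Fs lam * degExp lam ((n:ℝ)+1)) := by ring
  have hcoeff := congrArg (PowerSeries.coeff k) hG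
  rw [map_sum, map_add, PowerSeries.coeff_C_mul, coeff_Fs, PowerSeries.coeff_mul,
    Finset.Nat.sum_antidiagonal_eq_sum_range_succ_mk] at hcoeff
  simp only [PowerSeries.coeff_C_mul, degExp, PowerSeries.coeff_mk, coeff_Fs] at hcoeff
  have hk : (k.factorial : ℝ) ≠ 0 := Nat.cast_ne_zero.mpr (Nat.factorial_ne_zero k)
  have hT : T lam k n = (k.factorial : ℝ) *
      ∑ i ∈ range (n+1), (-1:ℝ)^i * (gff lam i k / k.factorial) := by
    rw [T, Finset.mul_sum]
    refine Finset.sum_congr rfl fun i _ => ?_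
    field_simp
  rw [hT, hcoeff, mul_add]
  congr 1
  · field_simp
  · rw [Finset.mul_sum, mul_comm ((-1:ℝ)^n), Finset.sum_mul, Finset.mul_sum]
    refine Finset.sum_congr rfl fun j hj => ?_
    have hjk : j ≤ k := Nat.lt_succ_iff.mp (Finset.mem_range.mp hj)
    have hfac : (k.choose j : ℝ) * j.factorial * (k-j).factorial = k.factorial := by
      rw_mod_cast [Nat.choose_mul_factorial_mul_factorial hjk]
    have hj1 : (j.factorial : ℝ) ≠ 0 := Nat.cast_ne_zero.mpr (Nat.factorial_ne_zero j)
    have hj2 : ((k-j).factorial : ℝ) ≠ 0 := Nat.cast_ne_zero.mpr (Nat.factorial_ne_zero _)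
    field_simp
    rw [← hfac]
    ring

lemma S2_zero {j : ℕ} (hj : 1 ≤ j) : S2 lam j 0 = 0 := by
  rw [S2, egfCoeff]
  simp [PowerSeries.coeff_one, Nat.pos_iff_ne_zero.mp hj]

lemma Et_zero : Et lam 0 = 1/2 := by
  rw [Et]
  simp [S2, egfCoeff, PowerSeries.coeff_zero_eq_constantCoeff]

lemma Et_Icc {j : ℕ} (hj : 1 ≤ j) :
    ∑ i ∈ Icc 1 j, (-1:ℝ)^i * i.factorial * (1/2:ℝ)^(i+1) * S2 lam j i = Et lam j := by
  rw [Et]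
  have hr : range (j+1) = insert 0 (Icc 1 j) := by
    ext x; simp; omega
  rw [hr, Finset.sum_insert (by simp)]
  rw [S2_zero lam hj]
  simp
end Main

/-- Theorem 9 of the paper: for `n ≥ 0` and `k ≥ 1`,
`T_{k,λ}(n) = ((-1)^n/2)(n+1)_{k,λ} + (1+(-1)^n) ∑_{j=1}^k (-1)^j j! (1/2)^{j+1} S_{2,λ}(k,j)
 + (-1)^n ∑_{j=1}^{k-1} C(k,j)(n+1)_{k-j,λ} ∑_{i=1}^j (-1)^i i! (1/2)^{i+1} S_{2,λ}(j,i)`. -/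
theorem T_eq_S2_expansion (lam : ℝ) (hlam : lam ≠ 0) (n k : ℕ) (hk : 1 ≤ k) :
    T lam k n =
      ((-1 : ℝ) ^ n / 2) * gff lam ((n : ℝ) + 1) k +
        (1 + (-1 : ℝ) ^ n) *
          ∑ j ∈ Finset.Icc 1 k,
            (-1 : ℝ) ^ j * (j.factorial : ℝ) * (1 / 2 : ℝ) ^ (j + 1) * S2 lam k j +
        (-1 : ℝ) ^ n *
          ∑ j ∈ Finset.Icc 1 (k - 1),
            (k.choose j : ℝ) * gff lam ((n : ℝ) + 1) (k - j) *
              ∑ i ∈ Finset.Icc 1 j,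
                (-1 : ℝ) ^ i * (i.factorial : ℝ) * (1 / 2 : ℝ) ^ (i + 1) * S2 lam j i := by
  rw [key_identity lam n k, Et_Icc lam hk]
  have hinner : ∀ j ∈ Finset.Icc 1 (k-1),
      (k.choose j : ℝ) * gff lam ((n : ℝ) + 1) (k - j) *
        (∑ i ∈ Finset.Icc 1 j, (-1 : ℝ) ^ i * (i.factorial : ℝ) * (1 / 2 : ℝ) ^ (i + 1) * S2 lam j i)
      = (k.choose j : ℝ) * Et lam j * gff lam ((n : ℝ) + 1) (k - j) := by
    intro j hj
    have h1 : 1 ≤ j := (Finset.mem_Icc.mp hj).1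
    rw [Et_Icc lam h1]; ring
  rw [Finset.sum_congr rfl hinner]
  have hr : range (k+1) = insert 0 (insert k (Icc 1 (k-1))) := by
    ext x; simp; omega
  have h0 : (0:ℕ) ∉ insert k (Icc 1 (k-1)) := by simp; omega
  have hkk : k ∉ Icc 1 (k-1) := by simp; omega
  rw [hr, Finset.sum_insert h0, Finset.sum_insert hkk]
  rw [Et_zero]
  simp only [Nat.choose_zero_right, Nat.choose_self, Nat.cast_one, Nat.sub_zero,
    Nat.sub_self, gff_zero]
  ring
end
end

section
/- For every positive integer m, every real x, and all integers k ≥ 0, one has ∑_{i=0}^{m−1} (−1)^i · ((x+i)/m)_{k,λ} = (1/m^k) · ∑_{l=0}^{k} C(k,l) · (x)_{k−l,mλ} · T_{l,mλ}(m−1), where (y)_{k,μ} denotes the generalized falling factorial and T_{l,μ}(n) the alternating degenerate power sum. -/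
open Finset

noncomputable section

lemma gff_vandermonde_s18 (mu x y : ℝ) (n : ℕ) :
    gff mu (x + y) n = ∑ l ∈ Finset.range (n+1),
      (n.choose l : ℝ) * gff mu x (n - l) * gff mu y l := by
  induction n with
  | zero => simp [gff]
  | succ n ih =>
    rw [gff_succ, ih, Finset.sum_mul]
    have key : ∀ l ∈ Finset.range (n+1),
        (n.choose l : ℝ) * gff mu x (n - l) * gff mu y l * (x + y - n * mu)
        = (n.choose l : ℝ) * gff mu x (n + 1 - l) * gff mu y l
          + (n.choose l : ℝ) * gff mu x (n - l) * gff mu y (l + 1) := by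
      intro l hl
      rw [Finset.mem_range] at hl
      have hln : l ≤ n := Nat.lt_succ_iff.mp hl
      have h1 : n + 1 - l = (n - l) + 1 := by omega
      rw [h1, gff_succ, gff_succ]
      have h2 : ((n - l : ℕ) : ℝ) = (n : ℝ) - l := by
        push_cast [Nat.cast_sub hln]; ring
      rw [h2]; ring
    rw [Finset.sum_congr rfl key, Finset.sum_add_distrib]
    -- LHS pieces:
    -- P1 := ∑_{l<n+1} C(n,l) a_{n+1-l} b_l
    -- P2 := ∑_{l<n+1} C(n,l) a_{n-l} b_{l+1}
    -- Goal: P1 + P2 = ∑_{l<n+2} C(n+1,l) a_{n+1-l} b_l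
    rw [Finset.sum_range_succ' (fun l => ((n+1).choose l : ℝ) * gff mu x (n + 1 - l) * gff mu y l)]
    rw [Finset.sum_range_succ' (fun l => (n.choose l : ℝ) * gff mu x (n + 1 - l) * gff mu y l)]
    have hP2 : ∑ l ∈ Finset.range (n+1), (n.choose l : ℝ) * gff mu x (n - l) * gff mu y (l + 1)
        = ∑ j ∈ Finset.range n, (n.choose j : ℝ) * gff mu x (n - j) * gff mu y (j + 1)
          + (n.choose n : ℝ) * gff mu x 0 * gff mu y (n + 1) := by
      rw [Finset.sum_range_succ]; simp
    rw [hP2]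
    have hsimp : ∀ j, n + 1 - (j + 1) = n - j := fun j => by omega
    simp only [hsimp, Nat.choose_succ_succ, Nat.cast_add, Nat.choose_zero_right,
      Nat.cast_one, Nat.sub_zero, Nat.choose_self]
    have hextend : ∑ j ∈ Finset.range n, (n.choose (j+1) : ℝ) * gff mu x (n - j) * gff mu y (j + 1)
        + (n.choose (n+1) : ℝ) * gff mu x (n - n) * gff mu y (n + 1)
        = ∑ j ∈ Finset.range (n+1), (n.choose (j+1) : ℝ) * gff mu x (n - j) * gff mu y (j + 1) := by
      rw [Finset.sum_range_succ]
    have hR : ∑ j ∈ Finset.range (n+1),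
        ((n.choose j : ℝ) + (n.choose (j+1) : ℝ)) * gff mu x (n - j) * gff mu y (j + 1)
        = (∑ j ∈ Finset.range (n+1), (n.choose j : ℝ) * gff mu x (n - j) * gff mu y (j + 1))
          + ∑ j ∈ Finset.range (n+1), (n.choose (j+1) : ℝ) * gff mu x (n - j) * gff mu y (j + 1) := by
      rw [← Finset.sum_add_distrib]
      exact Finset.sum_congr rfl fun j _ => by ring
    simp only [Nat.succ_eq_add_one]
    rw [hR, ← hextend, Finset.sum_range_succ
      (fun j => (n.choose j : ℝ) * gff mu x (n - j) * gff mu y (j + 1))]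
    simp [Nat.choose_succ_self]
    ring


lemma gff_div (lam y : ℝ) (m : ℕ) (hm : 0 < m) (k : ℕ) :
    gff lam (y / m) k = (1 / (m : ℝ) ^ k) * gff (m * lam) y k := by
  have hm' : (m : ℝ) ≠ 0 := Nat.cast_ne_zero.mpr hm.ne'
  unfold gff
  have h : ∀ i : ℕ, y / m - i * lam = (y - i * (m * lam)) / m := fun i => by
    field_simp
  simp_rw [h]
  rw [Finset.prod_div_distrib, Finset.prod_const, Finset.card_range]
  ring

/-- equation (48) of the paper: for `m ∈ ℕ`, `m ≥ 1`, `x ∈ ℝ`, `k ≥ 0`,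
`∑_{i=0}^{m-1} (-1)^i ((x+i)/m)_{k,λ} = (1/m^k) ∑_{l=0}^k C(k,l) (x)_{k-l,mλ} T_{l,mλ}(m-1)`. -/
theorem alt_sum_gff (lam : ℝ) (hlam : lam ≠ 0) (x : ℝ) (m : ℕ) (hm : 0 < m) (k : ℕ) :
    ∑ i ∈ Finset.range m, (-1 : ℝ) ^ i * gff lam ((x + i) / m) k =
      (1 / (m : ℝ) ^ k) *
        ∑ l ∈ Finset.range (k + 1),
          (k.choose l : ℝ) * gff (m * lam) x (k - l) * T (m * lam) l (m - 1) := by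
  have hmu := gff_vandermonde_s18 (m * lam) x
  calc ∑ i ∈ Finset.range m, (-1 : ℝ) ^ i * gff lam ((x + i) / m) k
      = ∑ i ∈ Finset.range m, (-1 : ℝ) ^ i *
          ((1 / (m : ℝ) ^ k) * gff (m * lam) (x + i) k) := by
        exact Finset.sum_congr rfl fun i _ => by rw [gff_div lam (x + i) m hm k]
    _ = (1 / (m : ℝ) ^ k) * ∑ i ∈ Finset.range m, (-1 : ℝ) ^ i * gff (m * lam) (x + i) k := by
        rw [Finset.mul_sum]; exact Finset.sum_congr rfl fun i _ => by ring
    _ = (1 / (m : ℝ) ^ k) * ∑ l ∈ Finset.range (k + 1),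
          (k.choose l : ℝ) * gff (m * lam) x (k - l) * T (m * lam) l (m - 1) := by
        congr 1
        have : ∀ i ∈ Finset.range m, (-1 : ℝ) ^ i * gff (m * lam) (x + i) k
            = ∑ l ∈ Finset.range (k + 1), (k.choose l : ℝ) * gff (m * lam) x (k - l)
                * ((-1 : ℝ) ^ i * gff (m * lam) i l) := by
          intro i _
          rw [hmu i, Finset.mul_sum]
          exact Finset.sum_congr rfl fun l _ => by ring
        rw [Finset.sum_congr rfl this, Finset.sum_comm]
        have hT : ∀ l, T (m * lam) l (m - 1)
            = ∑ i ∈ Finset.range m, (-1 : ℝ) ^ i * gff (m * lam) i l := by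
          intro l; unfold T
          rw [Nat.sub_add_cancel hm]
        refine Finset.sum_congr rfl fun l _ => ?_
        rw [hT l, Finset.mul_sum]
end
end
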